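/- arXiv:1805.08135 — 5 statements merged into one kernel-verified Lean document; each statement's English description precedes it below -/
import Mathlib

section
/- Let n ≥ 2 and let Ω ⊆ ℝⁿ be a set containing the closure of Q₃. If v : Ω → ℝ is continuous with |v(x)| ≤ 1/4 for all x ∈ Ω, then G⁻₁(v,Ω) ∩ Q₃ ≠ ∅; that is, there exist x̄ ∈ Q₃ and p ∈ ℝⁿ such that v(x) ≥ v(x̄) + p·(x−x̄) − (1/2)|x−x̄|² for all x ∈ Ω. -/
/-! Minimize `w x = v x + ‖x‖² / 2` over the compact closure of `Q₃`. Since `|v| ≤ 1/4`, a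
minimizer `x̄` has `w x̄ ≤ w 0 ≤ 1/4`, hence `‖x̄‖ ≤ 1` and `x̄ ∈ Q₃`; off `Q₃` we have `‖x‖ ≥ 3/2`, so
`w ≥ 7/8` there and `x̄` minimizes `w` on all of `Ω`. Expanding `‖x - x̄‖²`, the inequality
`w x̄ ≤ w x` is the touching paraboloid with slope `p = -x̄`. -/

open MeasureTheory Metric
open scoped InnerProductSpace ENNReal

noncomputable section

abbrev Euc (n : ℕ) := EuclideanSpace ℝ (Fin n)

/-- Loewner order -/
def matLE {n : ℕ} (A B : Matrix (Fin n) (Fin n) ℝ) : Prop := (B - A).PosSemidef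

/-- Pucci minimal operator -/
def pucciInf {n : ℕ} (lam Lam : ℝ) (M : Matrix (Fin n) (Fin n) ℝ) : ℝ :=
  sInf {t : ℝ | ∃ A : Matrix (Fin n) (Fin n) ℝ,
    A.IsSymm ∧ matLE (lam • 1) A ∧ matLE A (Lam • 1) ∧ t = (A * M).trace}

/-- Hessian matrix via second iterated Fréchet derivative -/
def hessianMatrix {n : ℕ} (φ : Euc n → ℝ) (x : Euc n) : Matrix (Fin n) (Fin n) ℝ :=
  Matrix.of fun i j =>
    iteratedFDeriv ℝ 2 φ x ![EuclideanSpace.single i 1, EuclideanSpace.single j 1]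

/-- viscosity supersolution of M⁻(D²v) ≤ 0 -/
def ViscSupersol {n : ℕ} (lam Lam : ℝ) (Ω : Set (Euc n)) (v : Euc n → ℝ) : Prop :=
  ∀ x₀ ∈ Ω, ∀ φ : Euc n → ℝ,
    (∃ U : Set (Euc n), IsOpen U ∧ x₀ ∈ U ∧ ContDiffOn ℝ 2 φ U) →
    IsLocalMinOn (fun x => v x - φ x) Ω x₀ →
    pucciInf lam Lam (hessianMatrix φ x₀) ≤ 0

def Gm {n : ℕ} (K : ℝ) (v : Euc n → ℝ) (Ω : Set (Euc n)) : Set (Euc n) :=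
  {xb | xb ∈ Ω ∧ ∃ p : Euc n, ∀ x ∈ Ω, v x ≥ v xb + ⟪p, x - xb⟫_ℝ - K / 2 * ‖x - xb‖ ^ 2}

def Am {n : ℕ} (K : ℝ) (v : Euc n → ℝ) (Ω : Set (Euc n)) : Set (Euc n) := Ω \ Gm K v Ω

/-- open cube of side r centered at x -/
def cube {n : ℕ} (r : ℝ) (x : Euc n) : Set (Euc n) := {y | ∀ i, |y i - x i| < r / 2}

theorem isBounded_cube {n : ℕ} (r : ℝ) (x : Euc n) : Bornology.IsBounded (cube r x) := by
  rw [Bornology.isBounded_induced]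
  refine (Bornology.IsBounded.pi fun i => isBounded_ball (x := x i) (r := r / 2)).subset ?_
  rintro _ ⟨y, hy, rfl⟩ i -
  simpa [Real.dist_eq] using hy i

theorem half_le_norm_of_notMem_cube {n : ℕ} {r : ℝ} {x : Euc n} (hx : x ∉ cube r 0) :
    r / 2 ≤ ‖x‖ := by
  obtain ⟨i, hi⟩ : ∃ i, r / 2 ≤ |x i| := by simpa [cube] using hx
  exact hi.trans (by simpa using PiLp.norm_apply_le x i)

theorem mem_cube_of_norm_lt {n : ℕ} {r : ℝ} {x : Euc n} (hx : ‖x‖ < r / 2) : x ∈ cube r 0 :=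
  not_imp_comm.1 half_le_norm_of_notMem_cube hx.not_ge

theorem le_add_inner_sub_of_isMinOn_add_sq_norm {E : Type*} [NormedAddCommGroup E]
    [InnerProductSpace ℝ E] {K : ℝ} {v : E → ℝ} {s : Set E} {xb : E}
    (hmin : IsMinOn (fun x => v x + K / 2 * ‖x‖ ^ 2) s xb) {x : E} (hx : x ∈ s) :
    v xb + ⟪-K • xb, x - xb⟫_ℝ - K / 2 * ‖x - xb‖ ^ 2 ≤ v x := by
  have hw : v xb + K / 2 * ‖xb‖ ^ 2 ≤ v x + K / 2 * ‖x‖ ^ 2 := hmin hx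
  have hexp : ⟪-K • xb, x - xb⟫_ℝ - K / 2 * ‖x - xb‖ ^ 2 = K / 2 * ‖xb‖ ^ 2 - K / 2 * ‖x‖ ^ 2 := by
    rw [norm_sub_sq_real, inner_smul_left, inner_sub_right, real_inner_self_eq_norm_sq,
      real_inner_comm]
    simp only [conj_trivial]
    ring
  linarith

theorem exists_mem_cube_isMinOn_add_half_sq_norm {n : ℕ} {Ω : Set (Euc n)}
    (hQ : closure (cube 3 0) ⊆ Ω) {v : Euc n → ℝ} (hv : ContinuousOn v Ω)
    (hbd : ∀ x ∈ Ω, |v x| ≤ 1 / 4) :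
    ∃ xb ∈ cube 3 (0 : Euc n), IsMinOn (fun x => v x + 1 / 2 * ‖x‖ ^ 2) Ω xb := by
  have hw : ContinuousOn (fun x => v x + 1 / 2 * ‖x‖ ^ 2) (closure (cube 3 (0 : Euc n))) :=
    (hv.mono hQ).add (by fun_prop)
  have h0 : (0 : Euc n) ∈ closure (cube 3 0) := subset_closure (mem_cube_of_norm_lt (by simp))
  obtain ⟨xb, hxb, hmin⟩ := (isBounded_cube 3 (0 : Euc n)).isCompact_closure.exists_isMinOn
    ⟨0, h0⟩ hw
  have hlow : ∀ x ∈ Ω, -(1 / 4) ≤ v x := fun x hx => (abs_le.1 (hbd x hx)).1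
  have hwxb : v xb + 1 / 2 * ‖xb‖ ^ 2 ≤ 1 / 4 := by
    have h0le : v xb + 1 / 2 * ‖xb‖ ^ 2 ≤ v 0 + 1 / 2 * ‖(0 : Euc n)‖ ^ 2 := hmin h0
    have := (abs_le.1 (hbd 0 (hQ h0))).2
    simp only [norm_zero] at h0le
    linarith
  have hnorm : ‖xb‖ ≤ 1 := by
    have := hlow xb (hQ hxb)
    nlinarith [norm_nonneg xb]
  refine ⟨xb, mem_cube_of_norm_lt (by linarith), fun x hx => ?_⟩
  by_cases hxQ : x ∈ closure (cube 3 0)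
  · exact hmin hxQ
  · have hx32 : 3 / 2 ≤ ‖x‖ := half_le_norm_of_notMem_cube fun h => hxQ (subset_closure h)
    have := hlow x hx
    change _ ≤ v x + 1 / 2 * ‖x‖ ^ 2
    nlinarith

theorem stmt_6_general (n : ℕ) (Ω : Set (Euc n)) (hQ : closure (cube 3 0) ⊆ Ω)
    (v : Euc n → ℝ) (hv : ContinuousOn v Ω) (hbd : ∀ x ∈ Ω, |v x| ≤ 1 / 4) :
    ∃ xb ∈ cube (3 : ℝ) (0 : Euc n), ∃ p : Euc n,
      ∀ x ∈ Ω, v x ≥ v xb + ⟪p, x - xb⟫_ℝ - 1 / 2 * ‖x - xb‖ ^ 2 := by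
  obtain ⟨xb, hxb, hmin⟩ := exists_mem_cube_isMinOn_add_half_sq_norm hQ hv hbd
  exact ⟨xb, hxb, -(1 : ℝ) • xb, fun x hx => le_add_inner_sub_of_isMinOn_add_sq_norm hmin hx⟩

/-- a bounded continuous function can be touched from below in Q₃ by a
paraboloid of opening 1. -/
theorem stmt_6 (n : ℕ) (hn : 2 ≤ n) (Ω : Set (Euc n)) (hQ : closure (cube 3 0) ⊆ Ω)
    (v : Euc n → ℝ) (hv : ContinuousOn v Ω) (hbd : ∀ x ∈ Ω, |v x| ≤ 1 / 4) :
    ∃ xb ∈ cube (3 : ℝ) (0 : Euc n), ∃ p : Euc n,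
      ∀ x ∈ Ω, v x ≥ v xb + ⟪p, x - xb⟫_ℝ - 1 / 2 * ‖x - xb‖ ^ 2 :=
  stmt_6_general n Ω hQ v hv hbd
end
end

section
/- Let n ≥ 2 be an integer, 0 < λ ≤ Λ and K > 0 real constants, and let M be a real symmetric n×n matrix such that M ≥ −K·I (in the Loewner order) and M⁻_{λ,Λ}(M) ≤ 0. Then M ≤ (K·(n−1)·Λ/λ)·I; equivalently, every eigenvalue of M lies in the interval [−K, K(n−1)Λ/λ]. -/
open MeasureTheory Metric
open scoped InnerProductSpace ENNReal

noncomputable section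

/-!
Diagonalize `M` in an orthonormal eigenbasis `vᵢ` with eigenvalues `μᵢ`. For an admissible `A`,
`tr (A M) = ∑ μᵢ ⟪vᵢ, A vᵢ⟫` with `⟪vᵢ, A vᵢ⟫ ∈ [λ, Λ]`, so `M⁻(M) ≥ ∑ min (λ μᵢ) (Λ μᵢ)`.
When this sum is `≤ 0` and every `μᵢ ≥ -K`, a nonnegative eigenvalue `μⱼ` is balanced by the
other `n - 1` terms, each at least `-Λ K`, whence `λ μⱼ ≤ (n - 1) Λ K`.
-/

theorem min_mul_le_mul_of_le_of_le {lam Lam a t : ℝ} (hlam : lam ≤ a) (hLam : a ≤ Lam) :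
    min (lam * t) (Lam * t) ≤ a * t := by
  rcases le_total 0 t with ht | ht
  · exact min_le_of_left_le (mul_le_mul_of_nonneg_right hlam ht)
  · exact min_le_of_right_le (mul_le_mul_of_nonpos_right hLam ht)

theorem mul_le_of_sum_min_mul_nonpos {ι : Type*} [Fintype ι] {lam Lam K : ℝ} {μ : ι → ℝ}
    (hlam : 0 ≤ lam) (hLam : lam ≤ Lam) (hK : 0 ≤ K) (hμ : ∀ i, -K ≤ μ i)
    (hsum : ∑ i, min (lam * μ i) (Lam * μ i) ≤ 0) (j : ι) :
    lam * μ j ≤ K * (Fintype.card ι - 1) * Lam := by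
  classical
  have hpos : 0 < Fintype.card ι := Fintype.card_pos_iff.2 ⟨j⟩
  rcases lt_or_ge (μ j) 0 with hj | hj
  · have hcard : (1 : ℝ) ≤ Fintype.card ι := Nat.one_le_cast.2 hpos
    exact (mul_nonpos_of_nonneg_of_nonpos hlam hj.le).trans
      (mul_nonneg (mul_nonneg hK (sub_nonneg.2 hcard)) (hlam.trans hLam))
  -- `λ μᵢ + Λ K = λ (μᵢ + K) + (Λ - λ) K` and `Λ μᵢ + Λ K = Λ (μᵢ + K)`
  have hterm : ∀ i, -(Lam * K) ≤ min (lam * μ i) (Lam * μ i) := fun i =>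
    le_min (by nlinarith [hμ i]) (by nlinarith [hμ i])
  have hrest : (Fintype.card ι - 1 : ℝ) * -(Lam * K) ≤
      ∑ i ∈ Finset.univ.erase j, min (lam * μ i) (Lam * μ i) := by
    have := Finset.card_nsmul_le_sum (Finset.univ.erase j) _ _ fun i _ => hterm i
    rwa [nsmul_eq_mul, Finset.card_erase_of_mem (Finset.mem_univ j), Finset.card_univ,
      Nat.cast_pred hpos] at this
  rw [← Finset.add_sum_erase _ _ (Finset.mem_univ j),
    min_eq_left (mul_le_mul_of_nonneg_right hLam hj)] at hsum
  linarith

section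

open Matrix
open scoped MatrixOrder

theorem Matrix.IsHermitian.trace_mul_eq_sum_eigenvalues {𝕜 ι : Type*} [RCLike 𝕜] [Fintype ι]
    [DecidableEq ι] {M : Matrix ι ι 𝕜} (hM : M.IsHermitian) (A : Matrix ι ι 𝕜) :
    (A * M).trace = ∑ i, (star ⇑(hM.eigenvectorBasis i) ⬝ᵥ A *ᵥ ⇑(hM.eigenvectorBasis i)) *
      hM.eigenvalues i := by
  set U : Matrix ι ι 𝕜 := ↑hM.eigenvectorUnitary
  have hU : U * star U = 1 := Unitary.coe_mul_star_self hM.eigenvectorUnitary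
  calc (A * M).trace = (star U * (A * M) * U).trace := by
        rw [trace_mul_cycle, hU, one_mul]
    _ = _ := by
        refine Finset.sum_congr rfl fun i _ => ?_
        have hrow : (star U) i = star ⇑(hM.eigenvectorBasis i) := by
          ext j; simp [U, star_apply]
        rw [diag_apply, mul_mul_apply, hrow,
          IsHermitian.eigenvectorUnitary_transpose_apply, ← mulVec_mulVec,
          hM.mulVec_eigenvectorBasis, mulVec_smul, dotProduct_smul,
          RCLike.real_smul_eq_coe_mul, mul_comm]

theorem Matrix.IsHermitian.dotProduct_eigenvectorBasis_self {ι : Type*} [Fintype ι]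
    [DecidableEq ι] {M : Matrix ι ι ℝ} (hM : M.IsHermitian) (i : ι) :
    ⇑(hM.eigenvectorBasis i) ⬝ᵥ ⇑(hM.eigenvectorBasis i) = 1 := by
  have h := real_inner_self_eq_norm_sq (hM.eigenvectorBasis i)
  rwa [hM.eigenvectorBasis.orthonormal.1 i, one_pow, EuclideanSpace.inner_eq_star_dotProduct,
    star_trivial] at h

variable {n : ℕ}

theorem matLE_iff_le {A B : Matrix (Fin n) (Fin n) ℝ} : matLE A B ↔ A ≤ B := Iff.rfl

theorem smul_one_matLE_smul_one {a b : ℝ} (hab : a ≤ b) :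
    matLE (a • 1 : Matrix (Fin n) (Fin n) ℝ) (b • 1) := by
  rw [matLE, ← sub_smul]
  exact PosSemidef.one.smul (sub_nonneg.2 hab)

theorem matLE_smul_one_iff {M : Matrix (Fin n) (Fin n) ℝ} (hM : M.IsHermitian) {c : ℝ} :
    matLE M (c • 1) ↔ ∀ i, hM.eigenvalues i ≤ c := by
  rw [matLE_iff_le, ← Algebra.algebraMap_eq_smul_one,
    le_algebraMap_iff_spectrum_le hM.isSelfAdjoint, hM.spectrum_real_eq_range_eigenvalues]
  simp

theorem smul_one_matLE_iff {M : Matrix (Fin n) (Fin n) ℝ} (hM : M.IsHermitian) {c : ℝ} :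
    matLE (c • 1) M ↔ ∀ i, c ≤ hM.eigenvalues i := by
  rw [matLE_iff_le, ← Algebra.algebraMap_eq_smul_one,
    algebraMap_le_iff_le_spectrum hM.isSelfAdjoint, hM.spectrum_real_eq_range_eigenvalues]
  simp

theorem le_dotProduct_mulVec_of_smul_one_matLE {A : Matrix (Fin n) (Fin n) ℝ} {c : ℝ}
    (h : matLE (c • 1) A) {v : Fin n → ℝ} (hv : v ⬝ᵥ v = 1) : c ≤ v ⬝ᵥ A *ᵥ v := by
  have := h.dotProduct_mulVec_nonneg v
  rwa [sub_mulVec, smul_mulVec, one_mulVec, star_trivial, dotProduct_sub, dotProduct_smul, hv,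
    smul_eq_mul, mul_one, sub_nonneg] at this

theorem dotProduct_mulVec_le_of_matLE_smul_one {A : Matrix (Fin n) (Fin n) ℝ} {c : ℝ}
    (h : matLE A (c • 1)) {v : Fin n → ℝ} (hv : v ⬝ᵥ v = 1) : v ⬝ᵥ A *ᵥ v ≤ c := by
  have := h.dotProduct_mulVec_nonneg v
  rwa [sub_mulVec, smul_mulVec, one_mulVec, star_trivial, dotProduct_sub, dotProduct_smul, hv,
    smul_eq_mul, mul_one, sub_nonneg] at this

theorem sum_min_mul_eigenvalues_le_pucciInf {lam Lam : ℝ} (hLam : lam ≤ Lam)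
    {M : Matrix (Fin n) (Fin n) ℝ} (hM : M.IsHermitian) :
    ∑ i, min (lam * hM.eigenvalues i) (Lam * hM.eigenvalues i) ≤ pucciInf lam Lam M := by
  have hadm : (lam • 1 : Matrix (Fin n) (Fin n) ℝ).IsSymm := by
    rw [IsSymm, transpose_smul, transpose_one]
  refine le_csInf ⟨_, lam • 1, hadm, smul_one_matLE_smul_one le_rfl,
    smul_one_matLE_smul_one hLam, rfl⟩ ?_
  rintro _ ⟨A, -, hlamA, hALam, rfl⟩
  rw [hM.trace_mul_eq_sum_eigenvalues]
  refine Finset.sum_le_sum fun i _ => ?_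
  have hv := hM.dotProduct_eigenvectorBasis_self i
  rw [star_trivial]
  exact min_mul_le_mul_of_le_of_le (le_dotProduct_mulVec_of_smul_one_matLE hlamA hv)
    (dotProduct_mulVec_le_of_matLE_smul_one hALam hv)

end

theorem stmt_14_general (n : ℕ) (lam Lam K : ℝ) (hlam : 0 < lam) (hLam : lam ≤ Lam)
    (hK : 0 < K) (M : Matrix (Fin n) (Fin n) ℝ) (hM : M.IsSymm)
    (hlow : matLE (-(K • 1)) M) (hpucci : pucciInf lam Lam M ≤ 0) :
    matLE M ((K * ((n : ℝ) - 1) * Lam / lam) • 1) := by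
  have hH : M.IsHermitian := Matrix.isHermitian_iff_isSymm.2 hM
  have hμ : ∀ i, -K ≤ hH.eigenvalues i := (smul_one_matLE_iff hH).1 (by rwa [neg_smul])
  have hsum := (sum_min_mul_eigenvalues_le_pucciInf hLam hH).trans hpucci
  rw [matLE_smul_one_iff hH]
  intro j
  have hj := mul_le_of_sum_min_mul_nonpos hlam.le hLam hK.le hμ hsum j
  rw [Fintype.card_fin] at hj
  rw [le_div_iff₀ hlam]
  linarith

/-- if M ≥ −K·I and M⁻_{λ,Λ}(M) ≤ 0 then M ≤ (K(n−1)Λ/λ)·I; equivalently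
every eigenvalue of M lies in [−K, K(n−1)Λ/λ]. -/
theorem stmt_14 (n : ℕ) (hn : 2 ≤ n) (lam Lam K : ℝ) (hlam : 0 < lam) (hLam : lam ≤ Lam)
    (hK : 0 < K) (M : Matrix (Fin n) (Fin n) ℝ) (hM : M.IsSymm)
    (hlow : matLE (-(K • 1)) M) (hpucci : pucciInf lam Lam M ≤ 0) :
    matLE M ((K * ((n : ℝ) - 1) * Lam / lam) • 1) :=
  stmt_14_general n lam Lam K hlam hLam hK M hM hlow hpucci
end
end

section
/- Let n ≥ 2 be an integer, 0 < λ ≤ Λ real constants, C > 0 and m > 0. Define w : ℝⁿ \ {0} → ℝ by w(x) = C·((|x|²/2)^{−m} − (2n)^{−m}). Then w is twice continuously differentiable on ℝⁿ \ {0}, and for every x ≠ 0, writing u = |x|²/2, the Hessian matrix D²w(x) = C·m·u^{−m−2}·((m+1)·x·xᵀ − u·I) has the eigenvalue C·m·u^{−m−2}·(m+1/2)·|x|² with eigenvector x and the eigenvalue −C·m·u^{−m−2}·|x|²/2 on the orthogonal complement of x; consequently M⁻_{λ,Λ}(D²w(x)) = C·m·u^{−m−2}·|x|²·(λ·(m+1/2)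 − Λ·(n−1)/2), which is ≥ 0 for all x ≠ 0 provided m ≥ (n−1)Λ/(2λ) − 1/2. -/
open MeasureTheory Metric
open scoped InnerProductSpace ENNReal

noncomputable section

/-!
Write `w(x) = g(‖x‖²/2)` with `g t = C (t^(-m) - k)`. For such radial functions the chain rule
gives `D²w(x) = g''(u) x xᵀ + g'(u) I`, `u = ‖x‖²/2`, i.e. `α P + β (I - P)` for the orthogonal
projection `P` onto `ℝ x`, with `α = C m (m + 1/2) u^(-m-2) ‖x‖² ≥ 0 ≥ β = -C m u^(-m-1)`.
For every admissible `A`, `λ tr P ≤ tr (A P)` and `tr (A (I - P)) ≤ Λ tr (I - P)`, because the trace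
of a positive semidefinite matrix times a projection is nonnegative; hence
`tr (A D²w) ≥ λ α + Λ (n - 1) β`, with equality for `A = λ P + Λ (I - P)`.
-/

open Matrix Filter Topology

section Pucci

variable {N : ℕ} {lam Lam : ℝ} {A P Q : Matrix (Fin N) (Fin N) ℝ}

lemma Matrix.PosSemidef.of_isStarProjection (hP : IsStarProjection P) : P.PosSemidef := by
  have hPh : Pᴴ = P := hP.isSelfAdjoint
  have h : Pᴴ * P = P := by rw [hPh, hP.isIdempotentElem.eq]
  exact h ▸ posSemidef_conjTranspose_mul_self P

lemma Matrix.PosSemidef.trace_mul_nonneg_of_isStarProjection (hA : A.PosSemidef)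
    (hP : IsStarProjection P) : 0 ≤ (A * P).trace := by
  have hPh : Pᴴ = P := hP.isSelfAdjoint
  have h : (Pᴴ * A * P).trace = (A * P).trace := by
    rw [hPh, trace_mul_comm, ← Matrix.mul_assoc, hP.isIdempotentElem.eq, trace_mul_comm]
  exact h ▸ (hA.conjTranspose_mul_mul_same P).trace_nonneg

lemma mul_trace_le_trace_mul_of_matLE (hA : matLE (lam • 1) A) (hP : IsStarProjection P) :
    lam * P.trace ≤ (A * P).trace := by
  have := hA.trace_mul_nonneg_of_isStarProjection hP
  rwa [Matrix.sub_mul, trace_sub, smul_one_mul, trace_smul, smul_eq_mul, sub_nonneg] at this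

lemma trace_mul_le_mul_trace_of_matLE (hA : matLE A (Lam • 1)) (hP : IsStarProjection P) :
    (A * P).trace ≤ Lam * P.trace := by
  have := hA.trace_mul_nonneg_of_isStarProjection hP
  rwa [Matrix.sub_mul, trace_sub, smul_one_mul, trace_smul, smul_eq_mul, sub_nonneg] at this

lemma pucciInf_smul_add_smul_one_sub (hlam : lam ≤ Lam) (hQ : IsStarProjection Q) {α β : ℝ}
    (hα : 0 ≤ α) (hβ : β ≤ 0) :
    pucciInf lam Lam (α • Q + β • (1 - Q)) = lam * α * Q.trace + Lam * β * (1 - Q).trace := by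
  have hQ' := hQ.one_sub
  have hQsymm : Q.IsSymm := by
    have h : Qᴴ = Q := hQ.isSelfAdjoint
    rwa [conjTranspose_eq_transpose_of_trivial] at h
  have hQQ : Q * Q = Q := hQ.isIdempotentElem.eq
  refine IsLeast.csInf_eq ⟨⟨lam • Q + Lam • (1 - Q), ?_, ?_, ?_, ?_⟩, ?_⟩
  · exact (hQsymm.smul lam).add ((isSymm_one.sub hQsymm).smul Lam)
  · rw [matLE, show lam • Q + Lam • (1 - Q) - lam • 1 = (Lam - lam) • (1 - Q) by module]
    exact (PosSemidef.of_isStarProjection hQ').smul (sub_nonneg.2 hlam)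
  · rw [matLE, show Lam • 1 - (lam • Q + Lam • (1 - Q)) = (Lam - lam) • Q by module]
    exact (PosSemidef.of_isStarProjection hQ).smul (sub_nonneg.2 hlam)
  · simp only [Matrix.add_mul, Matrix.mul_add, Matrix.smul_mul, Matrix.mul_smul, hQQ,
      hQ.mul_one_sub_self, hQ.one_sub_mul_self, hQ'.isIdempotentElem.eq, smul_zero, add_zero,
      zero_add, trace_add, trace_smul, smul_eq_mul]
    ring
  · rintro _ ⟨A, -, hlo, hhi, rfl⟩
    have h1 := mul_trace_le_trace_mul_of_matLE hlo hQ
    have h2 := trace_mul_le_mul_trace_of_matLE hhi hQ'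
    rw [Matrix.mul_add, trace_add, Matrix.mul_smul, Matrix.mul_smul, trace_smul, trace_smul,
      smul_eq_mul, smul_eq_mul]
    nlinarith [mul_le_mul_of_nonneg_left h1 hα, mul_le_mul_of_nonpos_left h2 hβ]

end Pucci

section RankOne

lemma smul_vecMulVec_sub_smul_one_mulVec {R n : Type*} [CommRing R] [Fintype n] [DecidableEq n]
    (a b : R) (v y : n → R) : (a • vecMulVec v v - b • 1) *ᵥ y = (a * (v ⬝ᵥ y)) • v - b • y := by
  rw [sub_mulVec, smul_mulVec, smul_mulVec, vecMulVec_mulVec, one_mulVec, op_smul_eq_smul,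
    smul_smul]

variable {N : ℕ} {v : Fin N → ℝ}

lemma isStarProjection_inv_smul_vecMulVec_self (hv : v ⬝ᵥ v ≠ 0) :
    IsStarProjection ((v ⬝ᵥ v)⁻¹ • vecMulVec v v) where
  isIdempotentElem := by
    rw [IsIdempotentElem, Matrix.smul_mul, Matrix.mul_smul, vecMulVec_mul_vecMulVec,
      vecMulVec_smul, smul_smul, smul_smul, inv_mul_cancel_right₀ hv]
  isSelfAdjoint := (IsSelfAdjoint.all _).smul <| by
    rw [IsSelfAdjoint, star_eq_conjTranspose, conjTranspose_vecMulVec, star_trivial]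

lemma pucciInf_smul_vecMulVec_sub_smul_one {lam Lam : ℝ} (hlam : lam ≤ Lam) (hv : v ⬝ᵥ v ≠ 0)
    {a b : ℝ} (hb : 0 ≤ b) (hab : b ≤ a * (v ⬝ᵥ v)) :
    pucciInf lam Lam (a • vecMulVec v v - b • 1) =
      lam * (a * (v ⬝ᵥ v) - b) - Lam * (N - 1) * b := by
  set Q := (v ⬝ᵥ v)⁻¹ • vecMulVec v v
  have hQ := isStarProjection_inv_smul_vecMulVec_self hv
  have htrace : Q.trace = 1 := by
    rw [trace_smul, trace_vecMulVec, smul_eq_mul, inv_mul_cancel₀ hv]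
  have hdecomp : a • vecMulVec v v - b • 1 = (a * (v ⬝ᵥ v) - b) • Q + (-b) • (1 - Q) := by
    rw [show vecMulVec v v = (v ⬝ᵥ v) • Q by rw [smul_smul, mul_inv_cancel₀ hv, one_smul]]
    module
  rw [hdecomp, pucciInf_smul_add_smul_one_sub hlam hQ (by linarith) (by linarith), trace_sub,
    trace_one, htrace, Fintype.card_fin]
  ring

end RankOne

section RadialHessian

variable {E : Type*} [NormedAddCommGroup E] [InnerProductSpace ℝ E]

lemma hasFDerivAt_half_norm_sq (x : E) :
    HasFDerivAt (fun y : E => ‖y‖ ^ 2 / 2) (innerSL ℝ x) x := by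
  have h := HasFDerivAt.mul_const (hasStrictFDerivAt_norm_sq x).hasFDerivAt (1 / 2 : ℝ)
  rw [show (1 / 2 : ℝ) • 2 • innerSL ℝ x = innerSL ℝ x by module] at h
  simpa only [← div_eq_mul_one_div] using h

variable {g g' : ℝ → ℝ} {g'' : ℝ} {x : E}

lemma fderiv_fderiv_comp_half_norm_sq_apply
    (hg : ∀ᶠ t in 𝓝 (‖x‖ ^ 2 / 2), HasDerivAt g (g' t) t)
    (hg' : HasDerivAt g' g'' (‖x‖ ^ 2 / 2)) (v w : E) :
    fderiv ℝ (fderiv ℝ fun y => g (‖y‖ ^ 2 / 2)) x v w =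
      g'' * (⟪x, v⟫_ℝ * ⟪x, w⟫_ℝ) + g' (‖x‖ ^ 2 / 2) * ⟪v, w⟫_ℝ := by
  have hfderiv : fderiv ℝ (fun y => g (‖y‖ ^ 2 / 2)) =ᶠ[𝓝 x]
      fun y => g' (‖y‖ ^ 2 / 2) • innerSL ℝ y := by
    have hq : Tendsto (fun y : E => ‖y‖ ^ 2 / 2) (𝓝 x) (𝓝 (‖x‖ ^ 2 / 2)) :=
      (hasFDerivAt_half_norm_sq x).continuousAt.tendsto
    filter_upwards [hq.eventually hg] with y hy
    exact (hy.comp_hasFDerivAt y (hasFDerivAt_half_norm_sq y)).fderiv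
  -- over `ℝ` the conjugate-linear `innerSL ℝ` is definitionally a bounded bilinear map
  have hD : HasFDerivAt (fun y => g' (‖y‖ ^ 2 / 2) • innerSL ℝ y) _ x :=
    (hg'.comp_hasFDerivAt x (hasFDerivAt_half_norm_sq x)).smul
      (innerSL ℝ : E →L[ℝ] E →L[ℝ] ℝ).hasFDerivAt
  rw [hfderiv.fderiv_eq, hD.fderiv]
  simp only [Function.comp_apply, _root_.add_apply, _root_.smul_apply,
    ContinuousLinearMap.smulRight_apply, coe_innerSL_apply, smul_eq_mul]
  rw [show (innerSL ℝ : E →L[ℝ] E →L[ℝ] ℝ) v w = ⟪v, w⟫_ℝ from rfl]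
  ring

end RadialHessian

lemma EuclideanSpace.dotProduct_ofLp_eq_inner {ι : Type*} [Fintype ι] (x y : EuclideanSpace ℝ ι) :
    x.ofLp ⬝ᵥ y.ofLp = ⟪x, y⟫_ℝ := by
  rw [EuclideanSpace.inner_eq_star_dotProduct, star_trivial, dotProduct_comm]

lemma hessianMatrix_comp_half_norm_sq {n : ℕ} {g g' : ℝ → ℝ} {g'' : ℝ} {x : Euc n}
    (hg : ∀ᶠ t in 𝓝 (‖x‖ ^ 2 / 2), HasDerivAt g (g' t) t)
    (hg' : HasDerivAt g' g'' (‖x‖ ^ 2 / 2)) :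
    hessianMatrix (fun y => g (‖y‖ ^ 2 / 2)) x = g'' • vecMulVec x x + g' (‖x‖ ^ 2 / 2) • 1 := by
  ext i j
  rw [hessianMatrix, of_apply, iteratedFDeriv_two_apply, Matrix.cons_val_zero,
    Matrix.cons_val_one, fderiv_fderiv_comp_half_norm_sq_apply hg hg']
  simp [EuclideanSpace.inner_single_right, one_apply, vecMulVec_apply, eq_comm]

section Barrier

variable {C m k : ℝ}

lemma contDiffOn_of_eq_rpow_half_norm_sq {E : Type*} [NormedAddCommGroup E]
    [InnerProductSpace ℝ E] {w : E → ℝ} (hw : ∀ x, w x = C * ((‖x‖ ^ 2 / 2) ^ (-m) - k))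
    {l : WithTop ℕ∞} : ContDiffOn ℝ l w {0}ᶜ := by
  rw [show w = fun y => C * ((‖y‖ ^ 2 / 2) ^ (-m) - k) from funext hw]
  intro x hx
  have hu : ‖x‖ ^ 2 / 2 ≠ 0 := by
    have := norm_ne_zero_iff.2 hx
    positivity
  exact ((((Real.contDiffAt_rpow_const_of_ne hu).comp x
    ((contDiff_norm_sq ℝ).div_const 2).contDiffAt).sub contDiffAt_const).const_smul
      C).contDiffWithinAt

variable {n : ℕ} {w : Euc n → ℝ} {x : Euc n}

lemma hessianMatrix_of_eq_rpow_half_norm_sq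
    (hw : ∀ x, w x = C * ((‖x‖ ^ 2 / 2) ^ (-m) - k)) (hx : x ≠ 0) :
    hessianMatrix w x = (C * m * (‖x‖ ^ 2 / 2) ^ (-m - 2)) •
      ((m + 1) • vecMulVec x x - (‖x‖ ^ 2 / 2) • 1) := by
  set u := ‖x‖ ^ 2 / 2 with hu_def
  have hu : 0 < u := by
    have := norm_pos_iff.2 hx
    positivity
  have hg : ∀ᶠ t in 𝓝 u,
      HasDerivAt (fun t => C * (t ^ (-m) - k)) (C * (-m * t ^ (-m - 1))) t :=
    (lt_mem_nhds hu).mono fun t ht =>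
      ((Real.hasDerivAt_rpow_const (Or.inl ht.ne')).sub_const k).const_mul C
  have hg' : HasDerivAt (fun t => C * (-m * t ^ (-m - 1)))
      (C * (-m * ((-m - 1) * u ^ (-m - 2)))) u := by
    have := ((Real.hasDerivAt_rpow_const (p := -m - 1) (Or.inl hu.ne')).const_mul (-m)).const_mul C
    rwa [show -m - 1 - 1 = -m - 2 by ring] at this
  rw [show w = fun y => C * ((‖y‖ ^ 2 / 2) ^ (-m) - k) from funext hw,
    hessianMatrix_comp_half_norm_sq hg hg', ← hu_def,
    show u ^ (-m - 1) = u ^ (-m - 2) * u by rw [← Real.rpow_add_one hu.ne']; ring_nf]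
  module

lemma pucciInf_hessianMatrix_of_eq_rpow_half_norm_sq {lam Lam : ℝ} (hlam : lam ≤ Lam)
    (hC : 0 ≤ C) (hm : 0 ≤ m) (hw : ∀ x, w x = C * ((‖x‖ ^ 2 / 2) ^ (-m) - k)) (hx : x ≠ 0) :
    pucciInf lam Lam (hessianMatrix w x) =
      C * m * (‖x‖ ^ 2 / 2) ^ (-m - 2) * ‖x‖ ^ 2 *
        (lam * (m + 1 / 2) - Lam * ((n : ℝ) - 1) / 2) := by
  have hx' := norm_pos_iff.2 hx
  have hc : 0 ≤ C * m * (‖x‖ ^ 2 / 2) ^ (-m - 2) := by positivity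
  have hxx : x.ofLp ⬝ᵥ x.ofLp = ‖x‖ ^ 2 := by
    rw [EuclideanSpace.dotProduct_ofLp_eq_inner, real_inner_self_eq_norm_sq]
  rw [hessianMatrix_of_eq_rpow_half_norm_sq hw hx, smul_sub, smul_smul, smul_smul,
    pucciInf_smul_vecMulVec_sub_smul_one hlam (by rw [hxx]; positivity) (by positivity)
      (by rw [hxx]; nlinarith [mul_nonneg hc (pow_pos hx' 2).le]), hxx]
  ring

end Barrier

theorem stmt_15_general (n : ℕ) (lam Lam C m : ℝ) (hlam : 0 < lam) (hLam : lam ≤ Lam)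
    (hC : 0 < C) (hm : 0 < m)
    (w : Euc n → ℝ)
    (hw : ∀ x : Euc n, w x = C * ((‖x‖ ^ 2 / 2) ^ (-m) - (2 * (n : ℝ)) ^ (-m))) :
    ContDiffOn ℝ 2 w {(0 : Euc n)}ᶜ ∧
    (∀ x : Euc n, x ≠ 0 →
      hessianMatrix w x =
        (C * m * (‖x‖ ^ 2 / 2) ^ (-m - 2)) •
          ((m + 1) • Matrix.of (fun i j => x i * x j) - (‖x‖ ^ 2 / 2) • 1)) ∧
    (∀ x : Euc n, x ≠ 0 →
      (hessianMatrix w x).mulVec (fun i => x i) =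
        fun i => (C * m * (‖x‖ ^ 2 / 2) ^ (-m - 2) * (m + 1 / 2) * ‖x‖ ^ 2) * x i) ∧
    (∀ x : Euc n, x ≠ 0 → ∀ y : Euc n, ⟪x, y⟫_ℝ = 0 →
      (hessianMatrix w x).mulVec (fun i => y i) =
        fun i => (-(C * m * (‖x‖ ^ 2 / 2) ^ (-m - 2) * ‖x‖ ^ 2 / 2)) * y i) ∧
    (∀ x : Euc n, x ≠ 0 →
      pucciInf lam Lam (hessianMatrix w x) =
        C * m * (‖x‖ ^ 2 / 2) ^ (-m - 2) * ‖x‖ ^ 2 *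
          (lam * (m + 1 / 2) - Lam * ((n : ℝ) - 1) / 2)) ∧
    (m ≥ ((n : ℝ) - 1) * Lam / (2 * lam) - 1 / 2 →
      ∀ x : Euc n, x ≠ 0 → 0 ≤ pucciInf lam Lam (hessianMatrix w x)) := by
  have hess := fun x (hx : x ≠ 0) => hessianMatrix_of_eq_rpow_half_norm_sq hw hx
  have hpucci := fun x (hx : x ≠ 0) =>
    pucciInf_hessianMatrix_of_eq_rpow_half_norm_sq hLam hC.le hm.le hw hx
  refine ⟨contDiffOn_of_eq_rpow_half_norm_sq hw, hess, fun x hx => ?_, fun x hx y hy => ?_,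
    hpucci, fun hm' x hx => ?_⟩
  · rw [hess x hx, smul_mulVec, smul_vecMulVec_sub_smul_one_mulVec,
      EuclideanSpace.dotProduct_ofLp_eq_inner, real_inner_self_eq_norm_sq]
    ext i
    simp only [Pi.smul_apply, Pi.sub_apply, smul_eq_mul]
    ring
  · rw [hess x hx, smul_mulVec, smul_vecMulVec_sub_smul_one_mulVec,
      EuclideanSpace.dotProduct_ofLp_eq_inner, hy]
    ext i
    simp only [mul_zero, zero_smul, zero_sub, Pi.smul_apply, Pi.neg_apply, smul_eq_mul]
    ring
  · have hbracket : Lam * ((n : ℝ) - 1) / 2 ≤ lam * (m + 1 / 2) := by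
      rw [ge_iff_le, sub_le_iff_le_add, div_le_iff₀ (by positivity)] at hm'
      linarith
    have hx' := norm_pos_iff.2 hx
    rw [hpucci x hx]
    exact mul_nonneg (by positivity) (sub_nonneg.2 hbracket)

/-- the barrier w(x) = C((|x|²/2)^{−m} − (2n)^{−m}) is C² away from the
origin, its Hessian has the stated form and eigenstructure, the Pucci minimal operator
takes the stated value on it, and it is a subsolution when m ≥ (n−1)Λ/(2λ) − 1/2. -/
theorem stmt_15 (n : ℕ) (hn : 2 ≤ n) (lam Lam C m : ℝ) (hlam : 0 < lam) (hLam : lam ≤ Lam)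
    (hC : 0 < C) (hm : 0 < m)
    (w : Euc n → ℝ)
    (hw : ∀ x : Euc n, w x = C * ((‖x‖ ^ 2 / 2) ^ (-m) - (2 * (n : ℝ)) ^ (-m))) :
    ContDiffOn ℝ 2 w {(0 : Euc n)}ᶜ ∧
    (∀ x : Euc n, x ≠ 0 →
      hessianMatrix w x =
        (C * m * (‖x‖ ^ 2 / 2) ^ (-m - 2)) •
          ((m + 1) • Matrix.of (fun i j => x i * x j) - (‖x‖ ^ 2 / 2) • 1)) ∧
    (∀ x : Euc n, x ≠ 0 →
      (hessianMatrix w x).mulVec (fun i => x i) =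
        fun i => (C * m * (‖x‖ ^ 2 / 2) ^ (-m - 2) * (m + 1 / 2) * ‖x‖ ^ 2) * x i) ∧
    (∀ x : Euc n, x ≠ 0 → ∀ y : Euc n, ⟪x, y⟫_ℝ = 0 →
      (hessianMatrix w x).mulVec (fun i => y i) =
        fun i => (-(C * m * (‖x‖ ^ 2 / 2) ^ (-m - 2) * ‖x‖ ^ 2 / 2)) * y i) ∧
    (∀ x : Euc n, x ≠ 0 →
      pucciInf lam Lam (hessianMatrix w x) =
        C * m * (‖x‖ ^ 2 / 2) ^ (-m - 2) * ‖x‖ ^ 2 *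
          (lam * (m + 1 / 2) - Lam * ((n : ℝ) - 1) / 2)) ∧
    (m ≥ ((n : ℝ) - 1) * Lam / (2 * lam) - 1 / 2 →
      ∀ x : Euc n, x ≠ 0 → 0 ≤ pucciInf lam Lam (hessianMatrix w x)) :=
  stmt_15_general n lam Lam C m hlam hLam hC hm w hw
end
end

section
/- Let n ≥ 1 be an integer and 0 < λ ≤ Λ real constants. If A is a real symmetric n×n matrix with λ·I ≤ A ≤ Λ·I (in the Loewner order), then trace(A) ≤ n·(Λ/λ)^{(n−1)/n}·(det A)^{1/n}. -/
/-!
All eigenvalues `μ i` of `A` lie in `[λ, Λ]`. Since `∏ j, μ j ≥ λ ^ (n - 1) * μ i` and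
`μ i ^ (n - 1) ≤ Λ ^ (n - 1)`, every `μ i` is at most `(Λ / λ) ^ ((n - 1) / n)` times the geometric
mean `(det A) ^ (1 / n)`; summing over `i` bounds the trace.
-/

noncomputable section

-- `matLE A B` is definitionally `A ≤ B` in this order.
open scoped MatrixOrder

namespace Matrix

variable {ι 𝕜 : Type*} [Fintype ι] [DecidableEq ι] [RCLike 𝕜] {A : Matrix ι ι 𝕜}

lemma isHermitian_of_le_smul_one {c : ℝ} (h : A ≤ c • 1) : A.IsHermitian := by
  have hc : (c • 1 : Matrix ι ι 𝕜).IsHermitian := by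
    rw [← Algebra.algebraMap_eq_smul_one]; exact IsSelfAdjoint.algebraMap _ (.all c)
  simpa using hc.sub h.1

namespace IsHermitian

variable (hA : A.IsHermitian)
include hA

lemma le_eigenvalues_of_smul_one_le {c : ℝ} (h : c • 1 ≤ A) (i : ι) : c ≤ hA.eigenvalues i := by
  rw [← Algebra.algebraMap_eq_smul_one] at h
  exact (algebraMap_le_iff_le_spectrum hA.isSelfAdjoint).1 h _ (hA.eigenvalues_mem_spectrum_real i)

lemma eigenvalues_le_of_le_smul_one {c : ℝ} (h : A ≤ c • 1) (i : ι) : hA.eigenvalues i ≤ c := by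
  rw [← Algebra.algebraMap_eq_smul_one] at h
  exact (le_algebraMap_iff_spectrum_le hA.isSelfAdjoint).1 h _ (hA.eigenvalues_mem_spectrum_real i)

end IsHermitian

end Matrix

section PinchedProduct

variable {ι : Type*} [Fintype ι] {lam Lam : ℝ} {μ : ι → ℝ}

lemma pow_card_sub_one_mul_le_prod (hlam : 0 ≤ lam) (hlo : ∀ j, lam ≤ μ j) (i : ι) :
    lam ^ (Fintype.card ι - 1) * μ i ≤ ∏ j, μ j := by
  classical
  rw [← Finset.prod_erase_mul _ _ (Finset.mem_univ i), ← Finset.card_univ,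
    ← Finset.card_erase_of_mem (Finset.mem_univ i), ← Finset.prod_const]
  gcongr with j
  · exact hlam.trans (hlo i)
  · exact hlo j

lemma pow_card_le_ratio_pow_mul_prod (hlam : 0 < lam) (hlo : ∀ j, lam ≤ μ j)
    (hhi : ∀ j, μ j ≤ Lam) (i : ι) :
    μ i ^ Fintype.card ι ≤ (Lam / lam) ^ (Fintype.card ι - 1) * ∏ j, μ j := by
  have hcard : Fintype.card ι ≠ 0 := (Fintype.card_pos_iff.2 ⟨i⟩).ne'
  have hμ : 0 ≤ μ i := hlam.le.trans (hlo i)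
  calc μ i ^ Fintype.card ι = μ i ^ (Fintype.card ι - 1) * μ i := (pow_sub_one_mul hcard _).symm
    _ ≤ Lam ^ (Fintype.card ι - 1) * μ i := by gcongr; exact hhi i
    _ = (Lam / lam) ^ (Fintype.card ι - 1) * (lam ^ (Fintype.card ι - 1) * μ i) := by
      rw [div_pow]; field_simp
    _ ≤ (Lam / lam) ^ (Fintype.card ι - 1) * ∏ j, μ j := by
      have : 0 ≤ Lam / lam := div_nonneg (hμ.trans (hhi i)) hlam.le
      gcongr
      exact pow_card_sub_one_mul_le_prod hlam.le hlo i

lemma le_ratio_rpow_mul_prod_rpow (hlam : 0 < lam) (hlo : ∀ j, lam ≤ μ j)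
    (hhi : ∀ j, μ j ≤ Lam) (i : ι) :
    μ i ≤ (Lam / lam) ^ (((Fintype.card ι : ℝ) - 1) / Fintype.card ι) *
      (∏ j, μ j) ^ ((1 : ℝ) / Fintype.card ι) := by
  set n := Fintype.card ι
  have hn : 0 < n := Fintype.card_pos_iff.2 ⟨i⟩
  have hμ : 0 ≤ μ i := hlam.le.trans (hlo i)
  have hratio : 0 ≤ Lam / lam := div_nonneg (hμ.trans (hhi i)) hlam.le
  have hprod : 0 ≤ ∏ j, μ j := Finset.prod_nonneg fun j _ ↦ hlam.le.trans (hlo j)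
  calc μ i = (μ i ^ n) ^ (1 / (n : ℝ)) := by
        rw [one_div, Real.pow_rpow_inv_natCast hμ hn.ne']
    _ ≤ ((Lam / lam) ^ (n - 1) * ∏ j, μ j) ^ (1 / (n : ℝ)) := by
        gcongr
        exact pow_card_le_ratio_pow_mul_prod hlam hlo hhi i
    _ = (Lam / lam) ^ (((n : ℝ) - 1) / n) * (∏ j, μ j) ^ (1 / (n : ℝ)) := by
        rw [Real.mul_rpow (pow_nonneg hratio _) hprod, ← Real.rpow_natCast, ← Real.rpow_mul hratio,
          Nat.cast_pred hn, mul_one_div]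

lemma sum_le_card_mul_ratio_rpow_mul_prod_rpow (hlam : 0 < lam) (hlo : ∀ j, lam ≤ μ j)
    (hhi : ∀ j, μ j ≤ Lam) :
    ∑ j, μ j ≤ Fintype.card ι * (Lam / lam) ^ (((Fintype.card ι : ℝ) - 1) / Fintype.card ι) *
      (∏ j, μ j) ^ ((1 : ℝ) / Fintype.card ι) := by
  rw [mul_assoc, ← nsmul_eq_mul]
  exact Finset.sum_le_card_nsmul _ _ _ fun i _ ↦ le_ratio_rpow_mul_prod_rpow hlam hlo hhi i

end PinchedProduct

theorem stmt_17_general (n : ℕ) (lam Lam : ℝ) (hlam : 0 < lam)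
    (A : Matrix (Fin n) (Fin n) ℝ)
    (hlow : matLE (lam • 1) A) (hhigh : matLE A (Lam • 1)) :
    A.trace ≤ (n : ℝ) * (Lam / lam) ^ (((n : ℝ) - 1) / n) * A.det ^ ((1 : ℝ) / n) := by
  have hA : A.IsHermitian := Matrix.isHermitian_of_le_smul_one hhigh
  have hbounds := sum_le_card_mul_ratio_rpow_mul_prod_rpow hlam
    (hA.le_eigenvalues_of_smul_one_le hlow) (hA.eigenvalues_le_of_le_smul_one hhigh)
  rw [hA.trace_eq_sum_eigenvalues, hA.det_eq_prod_eigenvalues]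
  simpa using hbounds

/-- for λ·I ≤ A ≤ Λ·I, trace(A) ≤ n (Λ/λ)^{(n−1)/n} (det A)^{1/n}. -/
theorem stmt_17 (n : ℕ) (hn : 1 ≤ n) (lam Lam : ℝ) (hlam : 0 < lam) (hLam : lam ≤ Lam)
    (A : Matrix (Fin n) (Fin n) ℝ) (hA : A.IsSymm)
    (hlow : matLE (lam • 1) A) (hhigh : matLE A (Lam • 1)) :
    A.trace ≤ (n : ℝ) * (Lam / lam) ^ (((n : ℝ) - 1) / n) * A.det ^ ((1 : ℝ) / n) :=
  stmt_17_general n lam Lam hlam A hlow hhigh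
end
end

section
/- Let n ≥ 2 and let Ω ⊆ ℝⁿ be a set containing the closure of Q₂. Let v : Ω → ℝ be continuous and suppose x* ∈ Q_{1/(4√n)} satisfies v(x) ≥ 1 − (1/(2n))|x−x*|² for all x ∈ Ω, with equality at x = x*. Set K = 32. Then for every y ∈ Q_{1/(4√n)}: (a) the function P(x) = v(x) + (K/2)|x−y|² attains its minimum over the closure of Q₁ at some point x₀ lying in the open cube Q₁; (b) any such minimizer x₀ satisfies v(z) + (K/2)|z−y|² ≥ v(x₀) + (K/2)|x₀−y|² for all z ∈ Ω; and (c) consequently x₀ ∈ G⁻₃₂(v,Ω), with touching slope p = K·(y − x₀), i.e. v(z) ≥ v(x₀) + p·(z−x₀) − (K/2)|z−x₀|² for all z ∈ Ω. -/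
open MeasureTheory Metric
open scoped InnerProductSpace ENNReal

noncomputable section

/-!
On all of `Ω`, `v` lies above the concave paraboloid `1 - |x - x*|² / (2n)`, which touches it
at `x*`. Fix `y` near the origin and slide the convex paraboloid `P = v + 16 |· - y|²`: at `x*`
it equals `1 + 16 |x* - y|²` with `|x* - y| ≤ 1/4`, whereas a point `z` of `Ω` outside the open
unit cube has `|z - y| ≥ 3/8`, and since `1/(2n) ≤ 1/4` the lower bound for `v` then gives
`P z > P x*`. So a minimizer of `P` on the compact closed unit cube lies in the open cube and
minimizes `P` on all of `Ω`; expanding `|z - y|²` around the minimizer `x₀` turns this into the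
concave paraboloid of opening `32` and slope `32 (y - x₀)` touching `v` at `x₀`.
-/

lemma mem_cube_zero {n : ℕ} {r : ℝ} {x : Euc n} : x ∈ cube r 0 ↔ ∀ i, |x i| < r / 2 := by
  simp [cube]

lemma cube_mono {n : ℕ} {r r' : ℝ} (h : r ≤ r') (x : Euc n) : cube r x ⊆ cube r' x :=
  fun _ hy i => (hy i).trans_le (by linarith)

lemma norm_le_sqrt_mul_of_forall_abs_le {n : ℕ} {x : Euc n} {s : ℝ} (hx : ∀ i, |x i| ≤ s) :
    ‖x‖ ≤ √n * s := by
  have hs : 0 ≤ √n * s := by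
    rcases Nat.eq_zero_or_pos n with rfl | hn
    · simp
    · exact mul_nonneg (Real.sqrt_nonneg _) ((abs_nonneg _).trans (hx ⟨0, hn⟩))
  rw [EuclideanSpace.norm_eq, Real.sqrt_le_left hs, mul_pow, Real.sq_sqrt n.cast_nonneg]
  calc ∑ i, ‖x i‖ ^ 2 ≤ ∑ _i : Fin n, s ^ 2 :=
        Finset.sum_le_sum fun i _ => by
          rw [Real.norm_eq_abs]; exact pow_le_pow_left₀ (abs_nonneg _) (hx i) 2
    _ = n * s ^ 2 := by simp

lemma abs_apply_le_norm {n : ℕ} (x : Euc n) (i : Fin n) : |x i| ≤ ‖x‖ := by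
  simpa using PiLp.norm_apply_le x i

lemma cube_subset_closedBall {n : ℕ} (r : ℝ) (x : Euc n) :
    cube r x ⊆ closedBall x (√n * (|r| / 2)) := fun z hz => by
  rw [mem_closedBall, dist_eq_norm]
  refine norm_le_sqrt_mul_of_forall_abs_le fun i => ?_
  simpa using (hz i).le.trans (by linarith [le_abs_self r])

lemma isCompact_closure_cube {n : ℕ} (r : ℝ) (x : Euc n) : IsCompact (closure (cube r x)) :=
  (isBounded_closedBall.subset (cube_subset_closedBall r x)).isCompact_closure

lemma norm_sub_le_of_mem_cube_zero {n : ℕ} {r : ℝ} {x y : Euc n} (hx : x ∈ cube r 0)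
    (hy : y ∈ cube r 0) : ‖x - y‖ ≤ √n * r := by
  rw [mem_cube_zero] at hx hy
  refine norm_le_sqrt_mul_of_forall_abs_le fun i => ?_
  simpa using (abs_sub _ _).trans (by linarith [hx i, hy i])

lemma touching_paraboloid_of_isMinOn {E : Type*} [NormedAddCommGroup E] [InnerProductSpace ℝ E]
    {v : E → ℝ} {Ω : Set E} {K : ℝ} {x₀ y : E}
    (hmin : IsMinOn (fun z => v z + K / 2 * ‖z - y‖ ^ 2) Ω x₀) {z : E} (hz : z ∈ Ω) :
    v z ≥ v x₀ + ⟪K • (y - x₀), z - x₀⟫_ℝ - K / 2 * ‖z - x₀‖ ^ 2 := by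
  have hle : v x₀ + K / 2 * ‖x₀ - y‖ ^ 2 ≤ v z + K / 2 * ‖z - y‖ ^ 2 := hmin hz
  have hexpand :
      ‖z - y‖ ^ 2 = ‖z - x₀‖ ^ 2 - 2 * ⟪y - x₀, z - x₀⟫_ℝ + ‖x₀ - y‖ ^ 2 := by
    rw [← sub_add_sub_cancel z x₀ y, norm_add_sq_real, ← neg_sub y x₀, inner_neg_right,
      real_inner_comm]
    ring
  rw [hexpand] at hle
  rw [real_inner_smul_left]
  linarith

lemma cube_inv_sqrt_subset {n : ℕ} (hn : 1 ≤ n) :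
    cube (1 / (4 * √n)) (0 : Euc n) ⊆ cube (1 / 4) 0 := by
  have h1 : 1 ≤ √(n : ℝ) := Real.one_le_sqrt.mpr (by exact_mod_cast hn)
  refine cube_mono ?_ 0
  gcongr
  linarith

lemma sq_gap_of_far {a b c d : ℝ} (ha : 3 / 8 ≤ a) (hb₀ : 0 ≤ b) (hb : b ≤ 1 / 4)
    (hc : c ≤ 1 / 4) (hd₀ : 0 ≤ d) (hd : d ≤ a + b) :
    16 * b ^ 2 < 16 * a ^ 2 - c * d ^ 2 := by
  have hcd : c * d ^ 2 ≤ 1 / 4 * (a + b) ^ 2 :=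
    mul_le_mul hc (pow_le_pow_left₀ hd₀ hd 2) (sq_nonneg d) (by norm_num)
  -- 16 (a² - b²) - (a + b)² / 4 = (a + b)(63 a - 65 b) / 4
  nlinarith [mul_pos (by linarith : 0 < a + b) (by linarith : 0 < 63 * a - 65 * b)]

lemma paraboloid_lt_of_notMem_cube_one {n : ℕ} (hn : 2 ≤ n) {Ω : Set (Euc n)}
    {v : Euc n → ℝ} {xs y z : Euc n} (hxs : xs ∈ cube (1 / (4 * √n)) 0)
    (hy : y ∈ cube (1 / (4 * √n)) 0)
    (htouch : ∀ x ∈ Ω, v x ≥ 1 - 1 / (2 * n) * ‖x - xs‖ ^ 2) (hvxs : v xs ≤ 1)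
    (hz : z ∈ Ω) (hzQ : z ∉ cube (1 : ℝ) 0) :
    v xs + 32 / 2 * ‖xs - y‖ ^ 2 < v z + 32 / 2 * ‖z - y‖ ^ 2 := by
  have hy_small := mem_cube_zero.mp (cube_inv_sqrt_subset (by omega) hy)
  have hxs_y : ‖xs - y‖ ≤ 1 / 4 := by
    have h := norm_sub_le_of_mem_cube_zero hxs hy
    have : √(n : ℝ) ≠ 0 := by positivity
    rwa [show √(n : ℝ) * (1 / (4 * √n)) = 1 / 4 by field_simp] at h
  have hz_y : 3 / 8 ≤ ‖z - y‖ := by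
    obtain ⟨i, hi⟩ : ∃ i, 1 / 2 ≤ |z i| := by
      simpa [mem_cube_zero] using hzQ
    have := abs_apply_le_norm (z - y) i
    have := abs_sub_abs_le_abs_sub (z i) (y i)
    simp only [PiLp.sub_apply] at *
    linarith [hy_small i]
  have hc : 1 / (2 * (n : ℝ)) ≤ 1 / 4 := by
    gcongr; exact_mod_cast (by omega : 4 ≤ 2 * n)
  have hz_xs : ‖z - xs‖ ≤ ‖z - y‖ + ‖xs - y‖ :=
    norm_sub_rev xs y ▸ norm_sub_le_norm_sub_add_norm_sub z y xs
  have := sq_gap_of_far hz_y (norm_nonneg _) hxs_y hc (norm_nonneg _) hz_xs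
  linarith [htouch z hz]

/-- sliding-paraboloid contact-point claim (Claim 1 in the proof of the
measure estimate), with K = 32. -/
theorem stmt_18 (n : ℕ) (hn : 2 ≤ n) (Ω : Set (Euc n)) (hQ : closure (cube 2 0) ⊆ Ω)
    (v : Euc n → ℝ) (hv : ContinuousOn v Ω)
    (xs : Euc n) (hxs : xs ∈ cube (1 / (4 * Real.sqrt n)) 0)
    (htouch : ∀ x ∈ Ω, v x ≥ 1 - 1 / (2 * n) * ‖x - xs‖ ^ 2)
    (heq : v xs = 1) :
    ∀ y ∈ cube (1 / (4 * Real.sqrt n)) (0 : Euc n),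
      -- (a) the minimum of P(x) = v(x) + (K/2)|x−y|² over the closed unit cube is
      -- attained at a point of the open unit cube
      (∃ x₀ ∈ cube (1 : ℝ) (0 : Euc n), ∀ z ∈ closure (cube (1 : ℝ) (0 : Euc n)),
          v x₀ + 32 / 2 * ‖x₀ - y‖ ^ 2 ≤ v z + 32 / 2 * ‖z - y‖ ^ 2) ∧
      -- (b) and (c): any minimizer over the closed unit cube is a global minimizer
      -- over Ω and belongs to G⁻₃₂(v,Ω) with touching slope p = K(y − x₀)
      (∀ x₀ ∈ closure (cube (1 : ℝ) (0 : Euc n)),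
        (∀ z ∈ closure (cube (1 : ℝ) (0 : Euc n)),
            v x₀ + 32 / 2 * ‖x₀ - y‖ ^ 2 ≤ v z + 32 / 2 * ‖z - y‖ ^ 2) →
        (∀ z ∈ Ω, v x₀ + 32 / 2 * ‖x₀ - y‖ ^ 2 ≤ v z + 32 / 2 * ‖z - y‖ ^ 2) ∧
        (∀ z ∈ Ω, v z ≥ v x₀ + ⟪(32 : ℝ) • (y - x₀), z - x₀⟫_ℝ - 32 / 2 * ‖z - x₀‖ ^ 2) ∧
        x₀ ∈ Gm 32 v Ω) := by
  intro y hy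
  set P : Euc n → ℝ := fun z => v z + 32 / 2 * ‖z - y‖ ^ 2
  set Q := closure (cube (1 : ℝ) (0 : Euc n))
  have hQΩ : Q ⊆ Ω := (closure_mono (cube_mono one_le_two 0)).trans hQ
  have hxsQ : xs ∈ cube (1 : ℝ) 0 :=
    cube_mono (by norm_num) 0 (cube_inv_sqrt_subset (by omega) hxs)
  have hfar : ∀ z ∈ Ω, z ∉ cube (1 : ℝ) 0 → P xs < P z := fun z hz hzQ =>
    paraboloid_lt_of_notMem_cube_one hn hxs hy htouch heq.le hz hzQ
  have hglobal : ∀ x₀, IsMinOn P Q x₀ → IsMinOn P Ω x₀ := fun x₀ hmin z hz => by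
    by_cases hzQ : z ∈ cube (1 : ℝ) 0
    · exact hmin (subset_closure hzQ)
    · exact (hmin (subset_closure hxsQ)).trans (hfar z hz hzQ).le
  have hPcont : ContinuousOn P Q := (hv.mono hQΩ).add (Continuous.continuousOn (by fun_prop))
  obtain ⟨x₀, hx₀Q, hmin⟩ :=
    (isCompact_closure_cube 1 0).exists_isMinOn ⟨xs, subset_closure hxsQ⟩ hPcont
  have hx₀ : x₀ ∈ cube (1 : ℝ) 0 := by
    by_contra h
    exact (hfar x₀ (hQΩ hx₀Q) h).not_ge (hmin (subset_closure hxsQ))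
  refine ⟨⟨x₀, hx₀, fun z hz => hmin hz⟩, fun x₁ hx₁ hmin₁ => ?_⟩
  have hmin₁Ω := hglobal x₁ hmin₁
  exact ⟨fun z hz => hmin₁Ω hz, fun z hz => touching_paraboloid_of_isMinOn hmin₁Ω hz,
    hQΩ hx₁, _, fun z hz => touching_paraboloid_of_isMinOn hmin₁Ω hz⟩
end
end
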